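/- Let the process be φ-mixing. Let n ∈ ℕ, let A ∈ 𝒞^n be an n-cylinder with ℙ(A) > 0, and set f_A = 1/(2ℙ(A)). Then for every integer k ≥ 1, |ℙ_A(τ_A > k f_A) − ℙ_A(τ_A > f_A) ℙ(τ_A > f_A)^{k−1}| ≤ 2 ε(A) (k−1) ℙ_A(τ_A > f_A − 2n) [ℙ(τ_A > f_A − 2n) + φ(n)]^{k−2}. -/

import Mathlib

/-!
Write `A` for the cylinder and `β = ℙ(τ_A > f_A)`, and discretise time by
`t_j = ⌊(j + 1) f_A⌋`, so that consecutive times differ by `m = ⌊f_A⌋` or `m + 1`. Leaving a gap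
of about `2n` steps after `t_j`, φ-mixing gives `ℙ(A ∩ {τ_A > t_{j+1}}) ≈ ℙ(A ∩ {τ_A > t_j}) β`.
A return to `A` inside the gap is detected through the last `w` symbols of the word, which
decouple from the past at distance `n_A - w`; so for the `w` attaining `ε(A)` the error is at
most `2 ε(A) ℙ(A ∩ {τ_A > t_j - 2n})`, and iterating mixing with gap `n` bounds the last factor
by `ℙ(A ∩ {τ_A > m - 2n}) (ℙ(τ_A > m - 2n) + φ(n))^j`. Telescoping the one-step errors gives the
factor `k - 1`.
If `f_A < 2n`, then `2 ε(A) ≥ 4n ℙ(A) > 1` and the right-hand side is at least `1`. If a letter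
of the word cannot be separated from another letter by measurable sets, every event `{τ_A > t}`
has full outer measure and the left-hand side vanishes.
-/

open MeasureTheory ProbabilityTheory Set Filter ENNReal

namespace ReturnTimes

variable {𝒞 : Type*}

/-- Bi-infinite sequences over the alphabet `𝒞`. -/
abbrev Omega (𝒞 : Type*) := ℤ → 𝒞

/-- The shift `T^k`: `(shiftk k x) m = x (m + k)`.  Thus `T = shiftk 1` and
`T^{-k} A = shiftk k ⁻¹' A`. -/
def shiftk (k : ℤ) (x : Omega 𝒞) : Omega 𝒞 := fun m => x (m + k)

/-- Stationarity: `ℙ` is invariant under the shift. -/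
def Stationary [MeasurableSpace 𝒞] (μ : MeasureTheory.Measure (Omega 𝒞)) : Prop :=
  ∀ S : Set (Omega 𝒞), μ (shiftk 1 ⁻¹' S) = μ S

/-- The `n`-cylinder `A = {X_0 = a_0, …, X_{n-1} = a_{n-1}}` given by the word `a`. -/
def cyl (n : ℕ) (a : ℕ → 𝒞) : Set (Omega 𝒞) := {x | ∀ i < n, x (i : ℤ) = a i}

/-- `A^{(w)} = {X_{n-w} = a_{n-w}, …, X_{n-1} = a_{n-1}}`, the cylinder on the last `w`
symbols of the word `a` (equal to `univ` when `w = 0`). -/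
def cylLast (n w : ℕ) (a : ℕ → 𝒞) : Set (Omega 𝒞) :=
  {x | ∀ i : ℕ, n - w ≤ i → i < n → x (i : ℤ) = a i}

/-- The event `{τ_A > t}` for a real `t`, where `τ_A(x) = inf {k ≥ 1 : T^k x ∈ A}`. -/
def tauGT (A : Set (Omega 𝒞)) (t : ℝ) : Set (Omega 𝒞) :=
  {x | ∀ k : ℕ, 1 ≤ k → (k : ℝ) ≤ t → shiftk (k : ℤ) x ∉ A}

/-- The hitting time `τ_A(x) = inf {k ≥ 1 : T^k x ∈ A}`, with values in `ℕ∞`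
(`⊤` if the point never hits `A`). -/
noncomputable def tau (A : Set (Omega 𝒞)) (x : Omega 𝒞) : ℕ∞ :=
  sInf {e : ℕ∞ | ∃ k : ℕ, e = (k : ℕ∞) ∧ 1 ≤ k ∧ shiftk (k : ℤ) x ∈ A}

/-- The period `p_A = min {k ∈ {1,…,n} : A ∩ T^{-k} A ≠ ∅}`. -/
noncomputable def period (n : ℕ) (A : Set (Omega 𝒞)) : ℕ :=
  sInf {k : ℕ | 1 ≤ k ∧ k ≤ n ∧ (A ∩ shiftk (k : ℤ) ⁻¹' A).Nonempty}

/-- The secondary periods `ℛ(A) = {k ∈ {⌊n/p_A⌋ p_A + 1, …, n-1} : A ∩ T^{-k} A ≠ ∅}`. -/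
noncomputable def secondary (n : ℕ) (A : Set (Omega 𝒞)) : Set ℕ :=
  {k : ℕ | (n / period n A) * period n A < k ∧ k < n ∧ (A ∩ shiftk (k : ℤ) ⁻¹' A).Nonempty}

open Classical in
/-- `n_A = min ℛ(A)` if `ℛ(A) ≠ ∅`, and `n_A = n` otherwise. -/
noncomputable def nA (n : ℕ) (A : Set (Omega 𝒞)) : ℕ :=
  if (secondary n A).Nonempty then sInf (secondary n A) else n

/-- The σ-algebra `ℱ_I` generated by the coordinates with indices in `I`. -/
def coordAlg [MeasurableSpace 𝒞] (I : Set ℤ) : MeasurableSpace (Omega 𝒞) :=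
  ⨆ i ∈ I, MeasurableSpace.comap (fun x : Omega 𝒞 => x i) inferInstance

/-- φ-mixing: `φ l` bounds `|ℙ_B(C) - ℙ(C)|` for all `B ∈ ℱ_{{0,…,n}}` with `ℙ(B) > 0`
and all `C ∈ ℱ_{{m : m ≥ n + l + 1}}`, and `φ l → 0` as `l → ∞`. -/
def IsPhiMixing [MeasurableSpace 𝒞] (μ : MeasureTheory.Measure (Omega 𝒞)) (φ : ℕ → ℝ) : Prop :=
  Tendsto φ atTop (nhds 0) ∧
  ∀ (l n : ℕ) (B C : Set (Omega 𝒞)),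
    MeasurableSet[coordAlg (Set.Icc (0 : ℤ) (n : ℤ))] B → 0 < μ B →
    MeasurableSet[coordAlg {i : ℤ | (n : ℤ) + (l : ℤ) + 1 ≤ i}] C →
    |(μ[|B] C).toReal - (μ C).toReal| ≤ φ l

/-- `ζ_A = ℙ_A(τ_A ≠ p_A)`. -/
noncomputable def zeta [MeasurableSpace 𝒞] (μ : MeasureTheory.Measure (Omega 𝒞)) (n : ℕ)
    (A : Set (Omega 𝒞)) : ℝ :=
  (μ[|A] {x | tau A x ≠ (period n A : ℕ∞)}).toReal

/-- `ε(A) = inf_{0 ≤ w ≤ n_A} [(2n + p_A) ℙ(A^{(w)}) + φ(n_A - w)]`. -/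
noncomputable def epsA [MeasurableSpace 𝒞] (μ : MeasureTheory.Measure (Omega 𝒞)) (φ : ℕ → ℝ)
    (n : ℕ) (a : ℕ → 𝒞) : ℝ :=
  (Finset.Iic (nA n (cyl n a))).inf' Finset.nonempty_Iic
    (fun w => ((2 * n + period n (cyl n a) : ℕ) : ℝ) * (μ (cylLast n w a)).toReal
       + φ (nA n (cyl n a) - w))

/-- `f(A,t) = ℙ(A) t e^{-(ζ_A - 16 ε(A)) ℙ(A) t}`. -/
noncomputable def fAt [MeasurableSpace 𝒞] (μ : MeasureTheory.Measure (Omega 𝒞)) (φ : ℕ → ℝ)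
    (n : ℕ) (a : ℕ → 𝒞) (t : ℝ) : ℝ :=
  (μ (cyl n a)).toReal * t *
    Real.exp (-(zeta μ n (cyl n a) - 16 * epsA μ φ n a) * (μ (cyl n a)).toReal * t)

/-- The sojourn time `S_A(x) = sup {k : x ∈ A ∩ T^{-j p_A} A for all j = 1,…,k}` (here `p`
stands for the period `p_A`), with values in `ℕ∞` and `S_A(x) = 0` when the set is empty. -/
noncomputable def sojourn (p : ℕ) (A : Set (Omega 𝒞)) (x : Omega 𝒞) : ℕ∞ :=
  sSup {e : ℕ∞ | ∃ k : ℕ, e = (k : ℕ∞) ∧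
    ∀ j : ℕ, 1 ≤ j → j ≤ k → x ∈ A ∩ shiftk ((j * p : ℕ) : ℤ) ⁻¹' A}

/-- `ρ_i(A) = ℙ(A | ∩_{j=1}^{i} T^{j p_A} A)` (here `p` stands for the period `p_A`;
note `T^{j} A = shiftk (-j) ⁻¹' A` since `T` is invertible). -/
noncomputable def rho [MeasurableSpace 𝒞] (μ : MeasureTheory.Measure (Omega 𝒞)) (p : ℕ)
    (A : Set (Omega 𝒞)) (i : ℕ) : ℝ :=
  (μ[| ⋂ j ∈ Finset.Icc 1 i, shiftk (-((j * p : ℕ) : ℤ)) ⁻¹' A] A).toReal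

theorem abs_sub_mul_pow_le {y : ℕ → ℝ} {β b c : ℝ} (hβ : 0 ≤ β) (hβb : β ≤ b)
    (h : ∀ j, |y (j + 1) - y j * β| ≤ c * b ^ j) (j : ℕ) :
    |y j - y 0 * β ^ j| ≤ j * c * b ^ (j - 1) := by
  induction j with
  | zero => simp
  | succ j ih =>
    have hc : 0 ≤ c := by simpa using (abs_nonneg _).trans (h 0)
    have hprev : |y j - y 0 * β ^ j| * β ≤ j * c * b ^ j := by
      rcases j with _ | j
      · simp
      · have ih' : |y (j + 1) - y 0 * β ^ (j + 1)| ≤ (j + 1 : ℕ) * c * b ^ j := by simpa using ih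
        have hb : 0 ≤ b := hβ.trans hβb
        calc |y (j + 1) - y 0 * β ^ (j + 1)| * β ≤ (j + 1 : ℕ) * c * b ^ j * b :=
              mul_le_mul ih' hβb hβ (by positivity)
          _ = (j + 1 : ℕ) * c * b ^ (j + 1) := by ring
    calc |y (j + 1) - y 0 * β ^ (j + 1)|
        = |(y (j + 1) - y j * β) + (y j - y 0 * β ^ j) * β| := by ring_nf
      _ ≤ |y (j + 1) - y j * β| + |y j - y 0 * β ^ j| * β := by
          grw [abs_add_le, abs_mul, abs_of_nonneg hβ]
      _ ≤ c * b ^ j + j * c * b ^ j := add_le_add (h j) hprev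
      _ = (j + 1 : ℕ) * c * b ^ (j + 1 - 1) := by
          simp only [Nat.add_sub_cancel]
          push_cast
          ring

theorem natFloor_add_natFloor_le {x y : ℝ} (hx : 0 ≤ x) (hy : 0 ≤ y) :
    ⌊x⌋₊ + ⌊y⌋₊ ≤ ⌊x + y⌋₊ :=
  Nat.le_floor (by push_cast; exact add_le_add (Nat.floor_le hx) (Nat.floor_le hy))

theorem natFloor_add_le {x y : ℝ} (hx : 0 ≤ x) (hy : 0 ≤ y) : ⌊x + y⌋₊ ≤ ⌊x⌋₊ + ⌊y⌋₊ + 1 :=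
  Nat.lt_succ_iff.1 <| (Nat.floor_lt (by positivity)).2 <| by
    push_cast
    linarith [Nat.lt_floor_add_one x, Nat.lt_floor_add_one y]

theorem measure_eq_measure_univ_of_forall_measurableSet_superset {α : Type*}
    [MeasurableSpace α] {S : Set α} (h : ∀ U, MeasurableSet U → S ⊆ U → U = univ)
    (ν : Measure α) : ν S = ν univ := by
  rw [← measure_toMeasurable, h _ (measurableSet_toMeasurable ν S) (subset_toMeasurable ν S)]

theorem exists_ne_forall_mem_of_not_measurableSet_singleton {α : Type*} [MeasurableSpace α]
    [Finite α] {x : α} (hx : ¬MeasurableSet ({x} : Set α)) :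
    ∃ y ≠ x, ∀ S, MeasurableSet S → x ∈ S → y ∈ S := by
  by_contra! h
  choose S hS hxS hyS using h
  refine hx ?_
  have hx_eq : ({x} : Set α) = ⋂ (y : α) (hy : y ≠ x), S y hy := by
    ext z
    simp only [mem_singleton_iff, mem_iInter]
    refine ⟨?_, fun hz => by_contra fun hzx => hyS z hzx (hz z hzx)⟩
    rintro rfl y hy
    exact hxS y hy
  rw [hx_eq]
  exact .iInter fun y => .iInter fun hy => hS y hy

theorem mem_iff_mem_of_forall_apply {ι β : Type*} [MeasurableSpace β] {x y : ι → β}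
    (hxy : ∀ i S, MeasurableSet S → (x i ∈ S ↔ y i ∈ S)) {U : Set (ι → β)}
    (hU : MeasurableSet U) : x ∈ U ↔ y ∈ U := by
  let m : MeasurableSpace (ι → β) :=
    { MeasurableSet' := fun V => x ∈ V ↔ y ∈ V
      measurableSet_empty := by simp
      measurableSet_compl := fun _ hV => not_congr hV
      measurableSet_iUnion := fun _ hf => by simp only [mem_iUnion]; exact exists_congr hf }
  have hle : MeasurableSpace.pi ≤ m :=
    iSup_le fun i => MeasurableSpace.comap_le_iff_le_map.2 fun S hS => hxy i S hS
  exact hle U hU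

theorem shiftk_zero : shiftk (0 : ℤ) = (id : Omega 𝒞 → Omega 𝒞) := by
  funext x m
  simp only [shiftk, add_zero, id]

theorem shiftk_shiftk (r d : ℤ) (x : Omega 𝒞) : shiftk d (shiftk r x) = shiftk (r + d) x := by
  funext m
  simp only [shiftk, add_assoc, add_comm d r]

theorem Stationary.measure_preimage_shiftk [MeasurableSpace 𝒞] {μ : Measure (Omega 𝒞)}
    (hstat : Stationary μ) (r : ℕ) (S : Set (Omega 𝒞)) : μ (shiftk r ⁻¹' S) = μ S := by
  induction r generalizing S with
  | zero => rw [Nat.cast_zero, shiftk_zero, preimage_id]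
  | succ r ih =>
    have h : shiftk ((r + 1 : ℕ) : ℤ) ⁻¹' S = shiftk r ⁻¹' (shiftk 1 ⁻¹' S) := by
      ext x
      simp only [mem_preimage, shiftk_shiftk, Nat.cast_succ]
    rw [h, ih, hstat]

def hitIn (A : Set (Omega 𝒞)) (r s : ℕ) : Set (Omega 𝒞) :=
  ⋃ d ∈ Ioc r s, shiftk (d : ℤ) ⁻¹' A

theorem mem_hitIn {A : Set (Omega 𝒞)} {r s : ℕ} {x : Omega 𝒞} :
    x ∈ hitIn A r s ↔ ∃ d : ℕ, r < d ∧ d ≤ s ∧ shiftk d x ∈ A := by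
  simp only [hitIn, mem_iUnion, mem_Ioc, mem_preimage, exists_prop, and_assoc]

theorem tauGT_eq_compl_hitIn (A : Set (Omega 𝒞)) (t : ℝ) :
    tauGT A t = (hitIn A 0 ⌊t⌋₊)ᶜ := by
  ext x
  simp only [tauGT, mem_ofPred_eq, mem_compl_iff, mem_hitIn, not_exists, not_and]
  refine forall_congr' fun d => ?_
  rw [Nat.one_le_iff_ne_zero, Nat.pos_iff_ne_zero]
  exact forall_congr' fun hd => by rw [Nat.le_floor_iff' hd]

theorem toReal_measure_tauGT [MeasurableSpace 𝒞] {μ : Measure (Omega 𝒞)} (A : Set (Omega 𝒞))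
    (t : ℝ) :
    (μ (tauGT A t)).toReal = μ.real (hitIn A 0 ⌊t⌋₊)ᶜ := by
  rw [tauGT_eq_compl_hitIn]
  rfl

theorem hitIn_mono {A A' : Set (Omega 𝒞)} {r r' s s' : ℕ} (hA : A ⊆ A') (hr : r' ≤ r)
    (hs : s ≤ s') : hitIn A r s ⊆ hitIn A' r' s' := by
  intro x hx
  obtain ⟨d, hrd, hds, hd⟩ := mem_hitIn.1 hx
  exact mem_hitIn.2 ⟨d, by omega, by omega, hA hd⟩

theorem hitIn_subset_union (A : Set (Omega 𝒞)) (r s s' : ℕ) :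
    hitIn A r s' ⊆ hitIn A r s ∪ hitIn A s s' := by
  intro x hx
  obtain ⟨d, hrd, hds, hd⟩ := mem_hitIn.1 hx
  rcases le_or_gt d s with h | h
  · exact Or.inl (mem_hitIn.2 ⟨d, hrd, h, hd⟩)
  · exact Or.inr (mem_hitIn.2 ⟨d, h, hds, hd⟩)

theorem hitIn_add_eq_preimage (A : Set (Omega 𝒞)) (r s : ℕ) :
    hitIn A r (r + s) = shiftk r ⁻¹' hitIn A 0 s := by
  ext x
  simp only [mem_preimage, mem_hitIn, shiftk_shiftk]
  constructor
  · rintro ⟨d, hrd, hds, hd⟩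
    refine ⟨d - r, by omega, by omega, ?_⟩
    rwa [show (r : ℤ) + ((d - r : ℕ) : ℤ) = d by omega]
  · rintro ⟨d, hd0, hds, hd⟩
    exact ⟨r + d, by omega, by omega, by rwa [Nat.cast_add]⟩

section Stationary

variable [MeasurableSpace 𝒞] {μ : Measure (Omega 𝒞)}

theorem Stationary.measure_compl_hitIn_add (hstat : Stationary μ) (A : Set (Omega 𝒞))
    (r s : ℕ) : μ (hitIn A r (r + s))ᶜ = μ (hitIn A 0 s)ᶜ := by
  rw [hitIn_add_eq_preimage, ← preimage_compl, hstat.measure_preimage_shiftk]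

theorem Stationary.measureReal_hitIn_le (hstat : Stationary μ) (A : Set (Omega 𝒞)) (r s : ℕ) :
    μ.real (hitIn A r s) ≤ (s - r : ℕ) * μ.real A := by
  have h : hitIn A r s = ⋃ d ∈ Finset.Ioc r s, shiftk (d : ℤ) ⁻¹' A := by
    simp only [hitIn, Finset.coe_Ioc, ← Finset.mem_coe]
  calc μ.real (hitIn A r s) ≤ ∑ d ∈ Finset.Ioc r s, μ.real (shiftk (d : ℤ) ⁻¹' A) := by
        rw [h]; exact measureReal_biUnion_finset_le _ _
    _ = (s - r : ℕ) * μ.real A := by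
        simp only [measureReal_def, hstat.measure_preimage_shiftk, Finset.sum_const,
          Nat.card_Ioc, nsmul_eq_mul]

variable [IsFiniteMeasure μ]

theorem Stationary.measureReal_compl_hitIn_le (hstat : Stationary μ) (A : Set (Omega 𝒞))
    (r s : ℕ) : μ.real (hitIn A 0 r)ᶜ ≤ μ.real (hitIn A 0 (r + s))ᶜ + s * μ.real A := by
  have hsub : (hitIn A 0 r)ᶜ ⊆ (hitIn A 0 (r + s))ᶜ ∪ hitIn A r (r + s) := by
    intro x hx
    by_contra h
    simp only [mem_union, mem_compl_iff, not_or, not_not] at h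
    exact (hitIn_subset_union A 0 r (r + s) h.1).elim hx h.2
  calc μ.real (hitIn A 0 r)ᶜ ≤ μ.real (hitIn A 0 (r + s))ᶜ + μ.real (hitIn A r (r + s)) :=
        (measureReal_mono hsub).trans (measureReal_union_le _ _)
    _ ≤ μ.real (hitIn A 0 (r + s))ᶜ + s * μ.real A := by
        grw [hstat.measureReal_hitIn_le, Nat.add_sub_cancel_left]

end Stationary

theorem cylLast_self {n : ℕ} {a : ℕ → 𝒞} : cylLast n n a = cyl n a := by
  ext x
  simp only [cylLast, cyl, mem_ofPred_eq, Nat.sub_self, zero_le, true_implies]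

section Coordinates

variable [MeasurableSpace 𝒞]

theorem coordAlg_le_pi (I : Set ℤ) :
    coordAlg I ≤ (MeasurableSpace.pi : MeasurableSpace (Omega 𝒞)) :=
  iSup₂_le fun i _ => le_iSup (fun j => MeasurableSpace.comap (fun x : Omega 𝒞 => x j) _) i

theorem measurableSet_coordAlg_coord_eq {I : Set ℤ} {i : ℤ} (hi : i ∈ I) {c : 𝒞}
    (hc : MeasurableSet ({c} : Set 𝒞)) : MeasurableSet[coordAlg I] {x : Omega 𝒞 | x i = c} :=
  le_iSup₂ (f := fun j (_ : j ∈ I) => MeasurableSpace.comap (fun x : Omega 𝒞 => x j) _) i hi _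
    ⟨{c}, hc, rfl⟩

variable {n w : ℕ} {a : ℕ → 𝒞}

theorem measurableSet_shiftk_cylLast (hsing : ∀ i < n, MeasurableSet ({a i} : Set 𝒞)) {d : ℕ}
    {I : Set ℤ} (hI : ∀ i : ℕ, n - w ≤ i → i < n → (i : ℤ) + d ∈ I) :
    MeasurableSet[coordAlg I] (shiftk d ⁻¹' cylLast n w a) := by
  have h : shiftk d ⁻¹' cylLast n w a = ⋂ i ∈ Ico (n - w) n, {x | x ((i : ℤ) + d) = a i} := by
    ext x
    simp only [mem_preimage, cylLast, shiftk, mem_ofPred_eq, mem_iInter, mem_Ico, and_imp]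
  rw [h]
  exact .biInter (to_countable _) fun i hi =>
    measurableSet_coordAlg_coord_eq (hI i hi.1 hi.2) (hsing i hi.2)

theorem measurableSet_hitIn_cylLast (hsing : ∀ i < n, MeasurableSet ({a i} : Set 𝒞))
    {r s : ℕ} {I : Set ℤ}
    (hI : ∀ d i : ℕ, r < d → d ≤ s → n - w ≤ i → i < n → (i : ℤ) + d ∈ I) :
    MeasurableSet[coordAlg I] (hitIn (cylLast n w a) r s) :=
  .biUnion (to_countable _) fun d hd =>
    measurableSet_shiftk_cylLast hsing fun i => hI d i hd.1 hd.2

theorem measurableSet_coordAlg_cyl (hsing : ∀ i < n, MeasurableSet ({a i} : Set 𝒞)) {ν : ℕ}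
    (hν : n ≤ ν + 1) : MeasurableSet[coordAlg (Icc 0 (ν : ℤ))] (cyl n a) := by
  simpa only [Nat.cast_zero, shiftk_zero, preimage_id, cylLast_self] using
    measurableSet_shiftk_cylLast (w := n) (d := 0) hsing (I := Icc 0 (ν : ℤ))
      fun i _ hi => by simp only [mem_Icc]; omega

theorem measurableSet_cyl (hsing : ∀ i < n, MeasurableSet ({a i} : Set 𝒞)) :
    MeasurableSet (cyl n a) :=
  coordAlg_le_pi _ _ (measurableSet_coordAlg_cyl hsing (ν := n) (by omega))

end Coordinates

theorem cond_toReal_eq_div {α : Type*} [MeasurableSpace α] {μ : Measure α} {A : Set α}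
    (hA : MeasurableSet A) (S : Set α) : (μ[|A] S).toReal = μ.real (A ∩ S) / μ.real A := by
  rw [cond_apply hA, ENNReal.toReal_mul, ENNReal.toReal_inv, div_eq_inv_mul]
  rfl

section Mixing

variable [MeasurableSpace 𝒞] {μ : Measure (Omega 𝒞)} [IsProbabilityMeasure μ] {φ : ℕ → ℝ}

theorem IsPhiMixing.nonneg (hmix : IsPhiMixing μ φ) (l : ℕ) : 0 ≤ φ l :=
  (abs_nonneg _).trans (hmix.2 l 0 univ univ .univ (by simp) .univ)

theorem IsPhiMixing.abs_measureReal_inter_sub_le (hmix : IsPhiMixing μ φ) {l ν : ℕ}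
    {B C : Set (Omega 𝒞)} (hB : MeasurableSet[coordAlg (Icc (0 : ℤ) (ν : ℤ))] B)
    (hC : MeasurableSet[coordAlg {i : ℤ | (ν : ℤ) + (l : ℤ) + 1 ≤ i}] C) :
    |μ.real (B ∩ C) - μ.real B * μ.real C| ≤ μ.real B * φ l := by
  rcases measureReal_nonneg.eq_or_lt with h0 | hpos
  · have hBC : μ.real (B ∩ C) = 0 := measureReal_mono_null inter_subset_left h0.symm
    simp [hBC, ← h0]
  · have h := hmix.2 l ν B C hB (ENNReal.toReal_pos_iff.1 hpos).1 hC
    rw [cond_toReal_eq_div (coordAlg_le_pi _ _ hB)] at h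
    calc |μ.real (B ∩ C) - μ.real B * μ.real C|
        = μ.real B * |μ.real (B ∩ C) / μ.real B - μ.real C| := by
          rw [← abs_of_pos hpos, ← abs_mul, abs_of_pos hpos, mul_sub, mul_div_cancel₀ _ hpos.ne']
      _ ≤ μ.real B * φ l := mul_le_mul_of_nonneg_left h hpos.le

end Mixing

theorem cyl_subset_cylLast {n : ℕ} {a : ℕ → 𝒞} (w : ℕ) : cyl n a ⊆ cylLast n w a :=
  fun _ hx i _ hi => hx i hi

theorem nA_le (n : ℕ) (A : Set (Omega 𝒞)) : nA n A ≤ n := by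
  unfold nA
  split_ifs with h
  · exact (Nat.sInf_mem h).2.1.le
  · exact le_rfl

section Epsilon

variable [MeasurableSpace 𝒞] {μ : Measure (Omega 𝒞)} {φ : ℕ → ℝ}
  {n : ℕ} {a : ℕ → 𝒞}

theorem exists_le_epsA : ∃ w ≤ nA n (cyl n a),
    2 * n * μ.real (cylLast n w a) + φ (nA n (cyl n a) - w) ≤ epsA μ φ n a := by
  obtain ⟨w, hw, hεw⟩ := Finset.exists_mem_eq_inf' Finset.nonempty_Iic fun w =>
    ((2 * n + period n (cyl n a) : ℕ) : ℝ) * (μ (cylLast n w a)).toReal + φ (nA n (cyl n a) - w)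
  refine ⟨w, Finset.mem_Iic.1 hw, ?_⟩
  rw [epsA, hεw, ← measureReal_def]
  push_cast
  nlinarith [measureReal_nonneg (μ := μ) (s := cylLast n w a),
    (Nat.cast_nonneg (period n (cyl n a)) : (0 : ℝ) ≤ _)]

theorem two_mul_measureReal_cyl_le_epsA [IsProbabilityMeasure μ] (hmix : IsPhiMixing μ φ) :
    2 * n * μ.real (cyl n a) ≤ epsA μ φ n a := by
  refine Finset.le_inf' _ _ fun w _ => ?_
  have hP : μ.real (cyl n a) ≤ μ.real (cylLast n w a) := measureReal_mono (cyl_subset_cylLast w)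
  have hφ := hmix.nonneg (nA n (cyl n a) - w)
  simp only [← measureReal_def]
  push_cast
  nlinarith [measureReal_nonneg (μ := μ) (s := cyl n a)]

end Epsilon

theorem eq_univ_of_tauGT_subset [MeasurableSpace 𝒞] [Finite 𝒞] {n i₀ : ℕ} {a : ℕ → 𝒞}
    (hi₀ : i₀ < n) (hnot : ¬MeasurableSet ({a i₀} : Set 𝒞)) (t : ℝ) {U : Set (Omega 𝒞)}
    (hU : MeasurableSet U) (hsub : tauGT (cyl n a) t ⊆ U) : U = univ := by
  classical
  obtain ⟨c, hc, hcS⟩ := exists_ne_forall_mem_of_not_measurableSet_singleton hnot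
  refine eq_univ_of_forall fun x => ?_
  -- replacing the symbol `a i₀` by the measurably indistinguishable `c` gives a point
  -- that never sees the word
  let y : Omega 𝒞 := fun m => if x m = a i₀ then c else x m
  have hy : y ∈ tauGT (cyl n a) t := fun d _ _ hd => by
    have h := hd i₀ hi₀
    simp only [shiftk, y] at h
    split_ifs at h <;> simp_all
  refine (mem_iff_mem_of_forall_apply (fun m S hS => ?_) hU).2 (hsub hy)
  simp only [y]
  split_ifs with h
  · rw [h]
    exact ⟨hcS S hS, fun hcS' => by_contra fun hx => hcS Sᶜ hS.compl hx hcS'⟩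
  · rfl

/-- `A ∩ {τ_A > u}` for the cylinder `A = cyl n a`. -/
def cylNoReturn (n : ℕ) (a : ℕ → 𝒞) (u : ℕ) : Set (Omega 𝒞) :=
  cyl n a \ hitIn (cyl n a) 0 u

theorem cylNoReturn_anti {n : ℕ} {a : ℕ → 𝒞} : Antitone (cylNoReturn n a) :=
  fun _ _ h => sdiff_subset_sdiff_right (hitIn_mono subset_rfl le_rfl h)

theorem toReal_cond_tauGT [MeasurableSpace 𝒞] {μ : Measure (Omega 𝒞)} {n : ℕ} {a : ℕ → 𝒞}
    (hA : MeasurableSet (cyl n a)) (t : ℝ) :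
    (μ[|cyl n a] (tauGT (cyl n a) t)).toReal
      = μ.real (cylNoReturn n a ⌊t⌋₊) / μ.real (cyl n a) := by
  rw [cond_toReal_eq_div hA, tauGT_eq_compl_hitIn]
  rfl

section Factorization

variable [MeasurableSpace 𝒞] {μ : Measure (Omega 𝒞)} [IsProbabilityMeasure μ] {φ : ℕ → ℝ}
  {n : ℕ} {a : ℕ → 𝒞}

theorem measurableSet_cylNoReturn (hsing : ∀ i < n, MeasurableSet ({a i} : Set 𝒞)) {u ν : ℕ}
    (h : u + n ≤ ν + 1) : MeasurableSet[coordAlg (Icc (0 : ℤ) (ν : ℤ))] (cylNoReturn n a u) := by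
  refine (measurableSet_coordAlg_cyl hsing (by omega)).diff ?_
  rw [← cylLast_self]
  exact measurableSet_hitIn_cylLast hsing fun d i _ hd _ hi => by simp only [mem_Icc]; omega

variable (hstat : Stationary μ) (hmix : IsPhiMixing μ φ)
  (hsing : ∀ i < n, MeasurableSet ({a i} : Set 𝒞))
include hstat hmix hsing

theorem abs_measureReal_cylNoReturn_inter_sub_le (u l s : ℕ) :
    |μ.real (cylNoReturn n a u ∩ (hitIn (cyl n a) (u + n + l) (u + n + l + s))ᶜ)
        - μ.real (cylNoReturn n a u) * μ.real (hitIn (cyl n a) 0 s)ᶜ|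
      ≤ μ.real (cylNoReturn n a u) * φ l := by
  have hC : MeasurableSet[coordAlg {i : ℤ | ((u + n : ℕ) : ℤ) + (l : ℤ) + 1 ≤ i}]
      (hitIn (cyl n a) (u + n + l) (u + n + l + s))ᶜ := by
    rw [← cylLast_self]
    exact (measurableSet_hitIn_cylLast hsing fun d i hd _ _ _ => by
      simp only [mem_ofPred_eq]; omega).compl
  have hshift : μ.real (hitIn (cyl n a) (u + n + l) (u + n + l + s))ᶜ
      = μ.real (hitIn (cyl n a) 0 s)ᶜ := by
    simp only [measureReal_def, hstat.measure_compl_hitIn_add]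
  rw [← hshift]
  exact hmix.abs_measureReal_inter_sub_le (measurableSet_cylNoReturn hsing (by omega)) hC

theorem measureReal_cylNoReturn_add_le (u l s : ℕ) :
    μ.real (cylNoReturn n a (u + n + l + s))
      ≤ μ.real (cylNoReturn n a u) * (μ.real (hitIn (cyl n a) 0 s)ᶜ + φ l) := by
  have hsub : cylNoReturn n a (u + n + l + s)
      ⊆ cylNoReturn n a u ∩ (hitIn (cyl n a) (u + n + l) (u + n + l + s))ᶜ :=
    subset_inter (cylNoReturn_anti (by omega))
      fun _ hx hhit => hx.2 (hitIn_mono subset_rfl (Nat.zero_le _) le_rfl hhit)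
  have h := abs_le.1 (abs_measureReal_cylNoReturn_inter_sub_le hstat hmix hsing u l s)
  linarith [measureReal_mono (μ := μ) hsub]

theorem measureReal_cylNoReturn_inter_hitIn_cylLast_le {v u w l r : ℕ} (hv : v + n ≤ u + 1)
    (hlw : l + w ≤ n) :
    μ.real (cylNoReturn n a v ∩ hitIn (cylLast n w a) u (u + r))
      ≤ μ.real (cylNoReturn n a v) * (r * μ.real (cylLast n w a) + φ l) := by
  have hC : MeasurableSet[coordAlg {i : ℤ | (u : ℤ) + (l : ℤ) + 1 ≤ i}]
      (hitIn (cylLast n w a) u (u + r)) :=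
    measurableSet_hitIn_cylLast hsing fun d i hd _ hi _ => by simp only [mem_ofPred_eq]; omega
  have h := abs_le.1 (hmix.abs_measureReal_inter_sub_le (measurableSet_cylNoReturn hsing hv) hC)
  have hW := hstat.measureReal_hitIn_le (cylLast n w a) u (u + r)
  rw [Nat.add_sub_cancel_left] at hW
  nlinarith [mul_le_mul_of_nonneg_left hW (measureReal_nonneg (μ := μ) (s := cylNoReturn n a v))]

theorem measureReal_cylNoReturn_add_sub_le {u l m s : ℕ} (hl : l ≤ n) (hm : 2 * n ≤ m)
    (hs : m ≤ s) :
    μ.real (cylNoReturn n a (u + s))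
        - μ.real (cylNoReturn n a u) * μ.real (hitIn (cyl n a) 0 m)ᶜ
      ≤ μ.real (cylNoReturn n a u) * (2 * n * μ.real (cyl n a) + φ l) := by
  obtain ⟨q, rfl⟩ : ∃ q, s = n + l + q := ⟨s - (n + l), by omega⟩
  have h := measureReal_cylNoReturn_add_le hstat hmix hsing u l q
  have hq : μ.real (hitIn (cyl n a) 0 q)ᶜ ≤ μ.real (hitIn (cyl n a) 0 (m - 2 * n))ᶜ :=
    measureReal_mono (compl_subset_compl.2 (hitIn_mono subset_rfl le_rfl (by omega)))
  have hm' := hstat.measureReal_compl_hitIn_le (cyl n a) (m - 2 * n) (2 * n)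
  rw [Nat.sub_add_cancel hm] at hm'
  push_cast at hm'
  rw [← add_assoc, ← add_assoc]
  nlinarith [mul_le_mul_of_nonneg_left (hq.trans hm')
    (measureReal_nonneg (μ := μ) (s := cylNoReturn n a u))]

theorem sub_measureReal_cylNoReturn_add_le (hn : 1 ≤ n) {u w l m s : ℕ} (hlw : l + w ≤ n)
    (hu : 2 * n ≤ u) (hs : n + l ≤ s) (hs' : s ≤ m + 1) :
    μ.real (cylNoReturn n a u) * μ.real (hitIn (cyl n a) 0 m)ᶜ
        - μ.real (cylNoReturn n a (u + s))
      ≤ μ.real (cylNoReturn n a u) * φ l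
        + μ.real (cylNoReturn n a (u - 2 * n)) * (2 * n * μ.real (cylLast n w a) + φ l) := by
  obtain ⟨q, rfl⟩ : ∃ q, s = n + l + q := ⟨s - (n + l), by omega⟩
  have hmix1 := abs_le.1 (abs_measureReal_cylNoReturn_inter_sub_le hstat hmix hsing u l q)
  have hq : μ.real (hitIn (cyl n a) 0 m)ᶜ ≤ μ.real (hitIn (cyl n a) 0 q)ᶜ :=
    measureReal_mono (compl_subset_compl.2 (hitIn_mono subset_rfl le_rfl (by omega)))
  -- a point of `A ∩ {τ_A > u}` that avoids `A` after time `u + n + l` but not before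
  -- sees the last `w` symbols of the word during `(u, u + n + l]`
  have hsub : cylNoReturn n a u ∩ (hitIn (cyl n a) (u + n + l) (u + n + l + q))ᶜ
      ⊆ cylNoReturn n a (u + (n + l + q))
        ∪ cylNoReturn n a (u - 2 * n) ∩ hitIn (cylLast n w a) u (u + (n + l)) := by
    rintro x ⟨⟨hxA, hx0⟩, hx1⟩
    by_cases hx : x ∈ hitIn (cyl n a) 0 (u + (n + l + q))
    · obtain ⟨d, h0d, hd, hdA⟩ := mem_hitIn.1 hx
      refine Or.inr ⟨⟨hxA, fun h => hx0 (hitIn_mono subset_rfl le_rfl (by omega) h)⟩,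
        mem_hitIn.2 ⟨d, ?_, ?_, cyl_subset_cylLast w hdA⟩⟩
      · by_contra
        exact hx0 (mem_hitIn.2 ⟨d, h0d, by omega, hdA⟩)
      · by_contra
        exact hx1 (mem_hitIn.2 ⟨d, by omega, by omega, hdA⟩)
    · exact Or.inl ⟨hxA, hx⟩
  have hW := measureReal_cylNoReturn_inter_hitIn_cylLast_le hstat hmix hsing
    (v := u - 2 * n) (u := u) (r := n + l) (by omega) hlw
  have hunion := (measureReal_mono (μ := μ) hsub).trans (measureReal_union_le _ _)
  have hnl : ((n + l : ℕ) : ℝ) ≤ 2 * n := by norm_cast; omega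
  nlinarith [mul_le_mul_of_nonneg_left hq (measureReal_nonneg (μ := μ) (s := cylNoReturn n a u)),
    mul_le_mul_of_nonneg_right hnl (measureReal_nonneg (μ := μ) (s := cylLast n w a)),
    measureReal_nonneg (μ := μ) (s := cylNoReturn n a (u - 2 * n))]


theorem abs_measureReal_cylNoReturn_add_sub_le (hn : 1 ≤ n) {u w l m s : ℕ} (hlw : l + w ≤ n)
    (hu : 2 * n ≤ u) (hm : 2 * n ≤ m) (hs : m ≤ s) (hs' : s ≤ m + 1) :
    |μ.real (cylNoReturn n a (u + s))
        - μ.real (cylNoReturn n a u) * μ.real (hitIn (cyl n a) 0 m)ᶜ|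
      ≤ 2 * (2 * n * μ.real (cylLast n w a) + φ l) * μ.real (cylNoReturn n a (u - 2 * n)) := by
  have hup := measureReal_cylNoReturn_add_sub_le hstat hmix hsing (u := u) (l := l) (by omega) hm hs
  have hlow := sub_measureReal_cylNoReturn_add_le hstat hmix hsing hn hlw hu (by omega) hs'
  have hanti : μ.real (cylNoReturn n a u) ≤ μ.real (cylNoReturn n a (u - 2 * n)) :=
    measureReal_mono (cylNoReturn_anti (Nat.sub_le u _))
  have hP : μ.real (cyl n a) ≤ μ.real (cylLast n w a) := measureReal_mono (cyl_subset_cylLast w)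
  have hφ := hmix.nonneg l
  have hPw : 0 ≤ 2 * n * μ.real (cylLast n w a) := by positivity
  rw [abs_le]
  constructor
  · nlinarith [mul_le_mul_of_nonneg_right hanti hφ,
      mul_nonneg (measureReal_nonneg (μ := μ) (s := cylNoReturn n a (u - 2 * n))) hPw]
  · have h2nP : 2 * n * μ.real (cyl n a) + φ l ≤ 2 * n * μ.real (cylLast n w a) + φ l := by
      gcongr
    nlinarith [mul_le_mul hanti h2nP (by positivity) measureReal_nonneg,
      mul_nonneg (measureReal_nonneg (μ := μ) (s := cylNoReturn n a (u - 2 * n))) hPw]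

theorem abs_measureReal_cylNoReturn_sub_le (hn : 1 ≤ n) {w l : ℕ} (hlw : l + w ≤ n)
    {t : ℕ → ℕ} (h2n : 2 * n ≤ t 0)
    (ht : ∀ j, t j + t 0 ≤ t (j + 1) ∧ t (j + 1) ≤ t j + t 0 + 1) (j : ℕ) :
    |μ.real (cylNoReturn n a (t j))
        - μ.real (cylNoReturn n a (t 0)) * μ.real (hitIn (cyl n a) 0 (t 0))ᶜ ^ j|
      ≤ j * (2 * (2 * n * μ.real (cylLast n w a) + φ l)
          * μ.real (cylNoReturn n a (t 0 - 2 * n)))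
        * (μ.real (hitIn (cyl n a) 0 (t 0 - 2 * n))ᶜ + φ n) ^ (j - 1) := by
  set b := μ.real (hitIn (cyl n a) 0 (t 0 - 2 * n))ᶜ + φ n
  have hb : 0 ≤ b := add_nonneg measureReal_nonneg (hmix.nonneg n)
  have hβb : μ.real (hitIn (cyl n a) 0 (t 0))ᶜ ≤ b :=
    (measureReal_mono (compl_subset_compl.2 (hitIn_mono subset_rfl le_rfl (Nat.sub_le _ _)))).trans
      (le_add_of_nonneg_right (hmix.nonneg n))
  have ht0 (j : ℕ) : t 0 ≤ t j := by
    cases j with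
    | zero => exact le_rfl
    | succ j => have := ht j; omega
  have hpow (j : ℕ) :
      μ.real (cylNoReturn n a (t j - 2 * n)) ≤ b ^ j * μ.real (cylNoReturn n a (t 0 - 2 * n)) := by
    refine le_geom (u := fun j => μ.real (cylNoReturn n a (t j - 2 * n))) hb j fun i _ => ?_
    have h := measureReal_cylNoReturn_add_le hstat hmix hsing
      (t (i + 1) - t 0 - 2 * n) n (t 0 - 2 * n)
    rw [show t (i + 1) - t 0 - 2 * n + n + n + (t 0 - 2 * n) = t (i + 1) - 2 * n by
      have := ht i; have := ht0 i; omega] at h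
    calc _ ≤ _ := h
      _ ≤ μ.real (cylNoReturn n a (t i - 2 * n)) * b :=
          mul_le_mul_of_nonneg_right
            (measureReal_mono (cylNoReturn_anti (by have := ht i; omega))) hb
      _ = _ := mul_comm _ _
  refine abs_sub_mul_pow_le (y := fun j => μ.real (cylNoReturn n a (t j)))
    measureReal_nonneg hβb (fun j => ?_) j
  have h := abs_measureReal_cylNoReturn_add_sub_le hstat hmix hsing hn hlw (u := t j)
    (s := t (j + 1) - t j) ((ht0 j).trans' h2n) h2n (by have := ht j; omega)
    (by have := ht j; omega)
  rw [Nat.add_sub_cancel' (by have := ht j; omega)] at h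
  have hE : 0 ≤ 2 * (2 * n * μ.real (cylLast n w a) + φ l) := by
    have := hmix.nonneg l
    positivity
  calc _ ≤ _ := h
    _ ≤ 2 * (2 * n * μ.real (cylLast n w a) + φ l)
          * (b ^ j * μ.real (cylNoReturn n a (t 0 - 2 * n))) :=
        mul_le_mul_of_nonneg_left (hpow j) hE
    _ = _ := by ring

end Factorization

section Cases

variable [MeasurableSpace 𝒞] {μ : Measure (Omega 𝒞)} [IsProbabilityMeasure μ] {φ : ℕ → ℝ}
  {n : ℕ} {a : ℕ → 𝒞}

theorem abs_toReal_cond_tauGT_sub_le_of_lt (hmix : IsPhiMixing μ φ) (hA : 0 < μ (cyl n a))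
    {fA : ℝ} (hfA : fA = 1 / (2 * μ.real (cyl n a))) (hsmall : fA < 2 * n) (j : ℕ) :
    |(μ[|cyl n a] (tauGT (cyl n a) (((j : ℝ) + 1) * fA))).toReal
        - (μ[|cyl n a] (tauGT (cyl n a) fA)).toReal * (μ (tauGT (cyl n a) fA)).toReal ^ j|
      ≤ 2 * epsA μ φ n a * j * (μ[|cyl n a] (tauGT (cyl n a) (fA - 2 * n))).toReal
          * ((μ (tauGT (cyl n a) (fA - 2 * n))).toReal + φ n) ^ (j - 1) := by
  rcases Nat.eq_zero_or_pos j with rfl | hj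
  · simp
  have hP : 0 < μ.real (cyl n a) := ENNReal.toReal_pos hA.ne' (measure_ne_top _ _)
  have hε : 1 ≤ 2 * epsA μ φ n a := by
    have := two_mul_measureReal_cyl_le_epsA hmix (n := n) (a := a)
    rw [hfA, div_lt_iff₀ (by positivity)] at hsmall
    linarith
  have huniv : tauGT (cyl n a) (fA - 2 * n) = univ := by
    rw [tauGT_eq_compl_hitIn, Nat.floor_eq_zero.2 (by linarith), compl_univ_iff]
    simp [hitIn]
  have := cond_isProbabilityMeasure (μ := μ) hA.ne'
  have hφ := hmix.nonneg n
  have hcond (S : Set (Omega 𝒞)) : (μ[|cyl n a] S).toReal ≤ 1 := measureReal_le_one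
  have hμ (S : Set (Omega 𝒞)) : (μ S).toReal ≤ 1 := measureReal_le_one
  rw [huniv, measure_univ, measure_univ, ENNReal.toReal_one, mul_one]
  calc _ ≤ (1 : ℝ) := by
        refine abs_sub_le_of_nonneg_of_le toReal_nonneg (hcond _) (by positivity) ?_
        exact mul_le_one₀ (hcond _) (by positivity) (pow_le_one₀ toReal_nonneg (hμ _))
    _ ≤ 2 * epsA μ φ n a * j * (1 + φ n) ^ (j - 1) := by
        have h1 : (1 : ℝ) ≤ (1 + φ n) ^ (j - 1) := one_le_pow₀ (by linarith)
        have hj' : (1 : ℝ) ≤ j := by exact_mod_cast hj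
        nlinarith [mul_le_mul hε hj' zero_le_one (by linarith)]

theorem abs_toReal_cond_tauGT_sub_le (hstat : Stationary μ) (hmix : IsPhiMixing μ φ)
    (hsing : ∀ i < n, MeasurableSet ({a i} : Set 𝒞)) (hn : 1 ≤ n) (hA : 0 < μ (cyl n a))
    {fA : ℝ} (hfA : 2 * n ≤ fA) (j : ℕ) :
    |(μ[|cyl n a] (tauGT (cyl n a) (((j : ℝ) + 1) * fA))).toReal
        - (μ[|cyl n a] (tauGT (cyl n a) fA)).toReal * (μ (tauGT (cyl n a) fA)).toReal ^ j|
      ≤ 2 * epsA μ φ n a * j * (μ[|cyl n a] (tauGT (cyl n a) (fA - 2 * n))).toReal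
          * ((μ (tauGT (cyl n a) (fA - 2 * n))).toReal + φ n) ^ (j - 1) := by
  obtain ⟨w, hw, hE⟩ := exists_le_epsA (μ := μ) (φ := φ) (n := n) (a := a)
  have hfA0 : 0 ≤ fA := le_trans (by positivity) hfA
  set t : ℕ → ℕ := fun j => ⌊((j : ℝ) + 1) * fA⌋₊
  have ht0 : t 0 = ⌊fA⌋₊ := by simp [t]
  have ht (j : ℕ) : t j + t 0 ≤ t (j + 1) ∧ t (j + 1) ≤ t j + t 0 + 1 := by
    have h : (((j + 1 : ℕ) : ℝ) + 1) * fA = ((j : ℝ) + 1) * fA + fA := by push_cast; ring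
    rw [ht0]
    simp only [t]
    rw [h]
    exact ⟨natFloor_add_natFloor_le (by positivity) hfA0, natFloor_add_le (by positivity) hfA0⟩
  have h2n : 2 * n ≤ t 0 := ht0 ▸ Nat.le_floor (by exact_mod_cast hfA)
  have key := abs_measureReal_cylNoReturn_sub_le hstat hmix hsing hn
    (w := w) (l := nA n (cyl n a) - w) (by have := nA_le n (cyl n a); omega) h2n ht j
  have hfloor : ⌊fA - 2 * n⌋₊ = t 0 - 2 * n := by
    rw [show fA - 2 * n = fA - ((2 * n : ℕ) : ℝ) by push_cast; ring, Nat.floor_sub_natCast, ht0]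
  have hAm := measurableSet_cyl hsing
  have hP : 0 < μ.real (cyl n a) := ENNReal.toReal_pos hA.ne' (measure_ne_top _ _)
  simp only [toReal_cond_tauGT hAm, toReal_measure_tauGT, hfloor, ← ht0]
  calc _ = |μ.real (cylNoReturn n a (t j))
          - μ.real (cylNoReturn n a (t 0)) * μ.real (hitIn (cyl n a) 0 (t 0))ᶜ ^ j|
            / μ.real (cyl n a) := by
        rw [div_mul_eq_mul_div, ← sub_div, abs_div, abs_of_pos hP]
    _ ≤ _ := div_le_div_of_nonneg_right key hP.le
    _ = 2 * (2 * n * μ.real (cylLast n w a) + φ (nA n (cyl n a) - w)) * j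
          * (μ.real (cylNoReturn n a (t 0 - 2 * n)) / μ.real (cyl n a))
          * (μ.real (hitIn (cyl n a) 0 (t 0 - 2 * n))ᶜ + φ n) ^ (j - 1) := by ring
    _ ≤ _ := by
        gcongr
        exact pow_nonneg (add_nonneg measureReal_nonneg (hmix.nonneg n)) _

end Cases

theorem key_factorization_general [Fintype 𝒞] [MeasurableSpace 𝒞]
    (μ : MeasureTheory.Measure (Omega 𝒞)) [IsProbabilityMeasure μ] (hstat : Stationary μ)
    (φ : ℕ → ℝ) (hmix : IsPhiMixing μ φ)
    (n : ℕ) (hn : 1 ≤ n) (a : ℕ → 𝒞) (hA : 0 < μ (cyl n a))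
    (k : ℕ) (hk : 1 ≤ k) (fA : ℝ) (hfA : fA = 1 / (2 * (μ (cyl n a)).toReal)) :
    |(μ[|cyl n a] (tauGT (cyl n a) ((k : ℝ) * fA))).toReal
        - (μ[|cyl n a] (tauGT (cyl n a) fA)).toReal
            * (μ (tauGT (cyl n a) fA)).toReal ^ (k - 1)|
      ≤ 2 * epsA μ φ n a * ((k : ℝ) - 1)
          * (μ[|cyl n a] (tauGT (cyl n a) (fA - 2 * n))).toReal
          * ((μ (tauGT (cyl n a) (fA - 2 * n))).toReal + φ n) ^ (k - 2) := by
  obtain ⟨j, rfl⟩ : ∃ j, k = j + 1 := ⟨k - 1, by omega⟩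
  rw [Nat.add_sub_cancel, show j + 1 - 2 = j - 1 by omega, Nat.cast_add_one, add_sub_cancel_right]
  rcases lt_or_ge fA (2 * n) with hsmall | hlarge
  · exact abs_toReal_cond_tauGT_sub_le_of_lt hmix hA hfA hsmall j
  by_cases hsing : ∀ i < n, MeasurableSet ({a i} : Set 𝒞)
  · exact abs_toReal_cond_tauGT_sub_le hstat hmix hsing hn hA hlarge j
  push Not at hsing
  obtain ⟨i, hi, hnot⟩ := hsing
  have hfull (t : ℝ) (ν : Measure (Omega 𝒞)) : ν (tauGT (cyl n a) t) = ν univ :=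
    measure_eq_measure_univ_of_forall_measurableSet_superset
      (fun _ hU hsub => eq_univ_of_tauGT_subset hi hnot t hU hsub) ν
  have := cond_isProbabilityMeasure (μ := μ) hA.ne'
  have hε := (two_mul_measureReal_cyl_le_epsA hmix (n := n) (a := a)).trans' (by positivity)
  have hφ := hmix.nonneg n
  simp only [hfull, measure_univ, ENNReal.toReal_one, one_pow, mul_one, sub_self, abs_zero]
  positivity

/-- **Proposition (key factorization).**  With `f_A = 1/(2ℙ(A))`: for every integer
`k ≥ 1`, `|ℙ_A(τ_A > k f_A) - ℙ_A(τ_A > f_A) ℙ(τ_A > f_A)^(k-1)| ≤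
2 ε(A) (k-1) ℙ_A(τ_A > f_A - 2n) [ℙ(τ_A > f_A - 2n) + φ(n)]^(k-2)`. -/
theorem key_factorization [Fintype 𝒞] [Nonempty 𝒞] [MeasurableSpace 𝒞]
    (μ : MeasureTheory.Measure (Omega 𝒞)) [IsProbabilityMeasure μ] (hstat : Stationary μ)
    (φ : ℕ → ℝ) (hmix : IsPhiMixing μ φ)
    (n : ℕ) (hn : 1 ≤ n) (a : ℕ → 𝒞) (hA : 0 < μ (cyl n a))
    (k : ℕ) (hk : 1 ≤ k) (fA : ℝ) (hfA : fA = 1 / (2 * (μ (cyl n a)).toReal)) :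
    |(μ[|cyl n a] (tauGT (cyl n a) ((k : ℝ) * fA))).toReal
        - (μ[|cyl n a] (tauGT (cyl n a) fA)).toReal
            * (μ (tauGT (cyl n a) fA)).toReal ^ (k - 1)|
      ≤ 2 * epsA μ φ n a * ((k : ℝ) - 1)
          * (μ[|cyl n a] (tauGT (cyl n a) (fA - 2 * n))).toReal
          * ((μ (tauGT (cyl n a) (fA - 2 * n))).toReal + φ n) ^ (k - 2) :=
  key_factorization_general μ hstat φ hmix n hn a hA k hk fA hfA

end ReturnTimes
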